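/- arXiv:2010.02421 — 4 statements merged into one kernel-verified Lean document; each statement's English description precedes it below -/
import Mathlib

section
/- In a commutative group G, let g ∈ G, let d₁, …, dₙ and x₁, …, xₙ and s be integers, let e = g^{d₁+⋯+dₙ}, let p₁, …, pₙ ∈ G be the group elements representing the voters' chosen primes, and let δ ∈ {1, …, n} be the index of the distributor. Then the product P = (p_δ · e^{x_δ}) · ∏_{i≠δ} ((p_i · g^{s}) · e^{x_i}) · g^{-(n-1)s} · ∏_{i=1}^{n} (∏_{k=1}^{n} g^{x_k})^{-d_i} equals ∏_{i=1}^{n} p_i. (Correctness of BVOT vote tallying: multiplying all encrypted votes, all decryption shares, and the unmasking factor g^{-(n-1)s} yields the product of the selected primes.) -/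
private lemma zpow_sum' {G : Type*} [CommGroup G] (g : G) {α : Type*} (s : Finset α)
    (f : α → ℤ) : g ^ (∑ i ∈ s, f i) = ∏ i ∈ s, g ^ f i := by
  induction s using Finset.cons_induction with
  | empty => simp
  | cons a t ha ih => simp [zpow_add, ih]

/-- Correctness of BVOT vote tallying: multiplying the distributor's encrypted
unmasked vote, all other voters' encrypted masked votes, the unmasking factor
`g^(-(n-1)s)`, and all decryption shares yields the product of the selected
primes `∏ᵢ pᵢ`. -/
theorem bvot_tallying_correct
    {G : Type*} [CommGroup G] (n : ℕ) (g : G) (d x : Fin n → ℤ) (s : ℤ)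
    (e : G) (he : e = g ^ (∑ i, d i)) (p : Fin n → G) (δ : Fin n) :
    (p δ * e ^ (x δ)) * (∏ i ∈ Finset.univ \ {δ}, (p i * g ^ s) * e ^ (x i)) *
        g ^ (-(((n : ℤ) - 1) * s)) *
        ∏ i, (∏ k, g ^ (x k)) ^ (-(d i)) = ∏ i, p i := by
  subst he
  have hn := δ.pos
  have hcard : ((Finset.univ \ {δ} : Finset (Fin n)).card : ℤ) = (n : ℤ) - 1 := by
    rw [Finset.card_sdiff_of_subset (by simp)]
    simp
    omega
  have hx : (∑ i ∈ Finset.univ \ {δ}, x i) = (∑ i, x i) - x δ := by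
    rw [Finset.sum_sdiff_eq_sub (by simp)]; simp
  have hp : (∏ i ∈ Finset.univ \ {δ}, p i) = (∏ i, p i) / p δ := by
    rw [Finset.prod_sdiff_eq_div (by simp)]; simp
  have key : ∀ (P Q : G) (a b c ee f : ℤ), a + b + c + ee + f = 0 →
      Q * g ^ a * ((P / Q) * g ^ b * g ^ c) * g ^ ee * g ^ f = P := by
    intro P Q a b c ee f h
    group
    rw [show b + c + ee + f = -a from by omega, div_eq_mul_inv]
    group
    simp [zpow_neg, mul_comm, mul_left_comm, mul_assoc]
  simp only [← zpow_sum', ← zpow_mul, Finset.prod_mul_distrib, Finset.prod_const,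
    ← zpow_natCast, ← zpow_add]
  simp only [Finset.sum_const, smul_eq_mul, nsmul_eq_mul, hcard, ← Finset.mul_sum, hx,
    show ∀ i, (∑ k : Fin n, x k) * -d i = -((∑ k : Fin n, x k) * d i) from fun i => by ring,
    Finset.sum_neg_distrib, hp]
  rw [key]
  ring
end

section
/- Let q be a prime and let p₁, …, p_k be distinct primes with p_i ≤ b for all i, where b^n < q. Let a, a' : {1, …, k} → ℕ be exponent vectors with a₁ + ⋯ + a_k ≤ n and a'₁ + ⋯ + a'_k ≤ n. If p₁^{a₁} ⋯ p_k^{a_k} ≡ p₁^{a'₁} ⋯ p_k^{a'_k} (mod q), then a_i = a'_i for every i. (Self-tallying is well defined: the residue of the tally product modulo q uniquely determines the number of votes received by each prime.) -/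
/-- Self-tallying is well defined: if the candidate primes are distinct primes
bounded by `b` with `b^n < q` for a prime `q`, then the residue of the tally
product modulo `q` uniquely determines the number of votes received by each
prime. -/
theorem bvot_tally_residue_determines_counts
    (q b n k : ℕ) (hq : q.Prime)
    (p : Fin k → ℕ) (hp_prime : ∀ i, (p i).Prime) (hp_inj : Function.Injective p)
    (hp_le : ∀ i, p i ≤ b) (hbn : b ^ n < q)
    (a a' : Fin k → ℕ) (ha : ∑ i, a i ≤ n) (ha' : ∑ i, a' i ≤ n)
    (hmod : (∏ i, p i ^ a i) ≡ (∏ i, p i ^ a' i) [MOD q]) :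
    ∀ i, a i = a' i := by
  intro j
  have hb1 : 1 ≤ b := le_trans (hp_prime j).one_lt.le (hp_le j)
  have hlt : ∀ c : Fin k → ℕ, (∑ i, c i ≤ n) → (∏ i, p i ^ c i) < q := by
    intro c hc
    calc ∏ i, p i ^ c i ≤ ∏ i, b ^ c i :=
          Finset.prod_le_prod (fun i _ => Nat.zero_le _)
            (fun i _ => Nat.pow_le_pow_left (hp_le i) _)
      _ = b ^ (∑ i, c i) := by rw [Finset.prod_pow_eq_pow_sum]
      _ ≤ b ^ n := Nat.pow_le_pow_right hb1 hc
      _ < q := hbn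
  have heq : (∏ i, p i ^ a i) = (∏ i, p i ^ a' i) := by
    have h1 := hlt a ha
    have h2 := hlt a' ha'
    have := hmod
    unfold Nat.ModEq at this
    rwa [Nat.mod_eq_of_lt h1, Nat.mod_eq_of_lt h2] at this
  have hfact : ∀ c : Fin k → ℕ, (∏ i, p i ^ c i).factorization (p j) = c j := by
    intro c
    rw [Nat.factorization_prod (fun i _ => pow_ne_zero _ (hp_prime i).ne_zero)]
    simp only [Nat.factorization_pow]
    rw [Finset.sum_apply']
    rw [Finset.sum_eq_single j]
    · simp [(hp_prime j).factorization]
    · intro i _ hij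
      simp only [Nat.Prime.factorization (hp_prime i), Finsupp.smul_apply,
        Finsupp.single_apply, smul_eq_mul]
      rw [if_neg (fun h => hij (hp_inj h))]
      simp
    · simp
  have := congrArg (fun m => m.factorization (p j)) heq
  simpa [hfact] using this
end

section
/- Let q be a prime, let p₁, …, p_k be distinct primes each at most b, and suppose b^{n+1} < q. Let j₀ ≠ j₁ be indices in {1, …, k}, and let r(2), …, r(n) ∈ {1, …, k} be the honest voters' choices with r(i) ≠ j₀ for all i (no honest voter votes for prime p_{j₀}). Then for every exponent vector c : {1, …, k} → ℕ with c₁ + ⋯ + c_k = n, we have p_{j₁}² · ∏_{i=2}^{n} p_{r(i)} ≢ p_{j₀} · ∏_{j=1}^{k} p_j^{c_j} (mod q). (Detection of a cheating voter: if a voter casts p_{j₁}² · p_{j₀}^{-1} instead of a single prime and no one voted for p_{j₀}, then the resulting tally residue cannot equal any valid tally, since any valid tally would have to include a vote of −1 for p_{j₀}.) -/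
/-- Detection of a cheating voter: suppose the distinct candidate primes are
each at most `b` with `b^(n+1) < q` for a prime `q`, and the `n - 1` honest
voters' choices `r` never pick the prime `p j₀`.  If the cheating voter casts
`p j₁ ^ 2 * p j₀ ⁻¹` instead of a single prime, the resulting tally residue
`p j₁ ^ 2 * ∏ᵢ p (r i)` cannot be congruent mod `q` to
`p j₀ * ∏ⱼ pⱼ^(cⱼ)` for any valid tally, i.e. any exponent vector `c`
summing to `n`. -/
theorem bvot_cheater_detected
    (q b n k : ℕ) (hq : q.Prime) (hn : 1 ≤ n)
    (p : Fin k → ℕ) (hp_prime : ∀ i, (p i).Prime) (hp_inj : Function.Injective p)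
    (hp_le : ∀ i, p i ≤ b) (hbn : b ^ (n + 1) < q)
    (j₀ j₁ : Fin k) (hj : j₀ ≠ j₁)
    (r : Fin (n - 1) → Fin k) (hr : ∀ i, r i ≠ j₀) :
    ∀ c : Fin k → ℕ, ∑ j, c j = n →
      ¬ (p j₁ ^ 2 * ∏ i, p (r i)) ≡ (p j₀ * ∏ j, p j ^ c j) [MOD q] := by
  intro c hc hmod
  have hb2 : 2 ≤ b := le_trans (hp_prime j₀).two_le (hp_le j₀)
  -- bound LHS
  have hL : p j₁ ^ 2 * ∏ i, p (r i) ≤ b ^ (n + 1) := by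
    have h1 : p j₁ ^ 2 ≤ b ^ 2 := Nat.pow_le_pow_left (hp_le j₁) 2
    have h2 : (∏ i, p (r i)) ≤ b ^ (n - 1) := by
      calc (∏ i : Fin (n-1), p (r i)) ≤ ∏ _i : Fin (n-1), b :=
            Finset.prod_le_prod (fun i _ => Nat.zero_le _) (fun i _ => hp_le _)
        _ = b ^ (n - 1) := by simp
    calc p j₁ ^ 2 * ∏ i, p (r i) ≤ b ^ 2 * b ^ (n - 1) := Nat.mul_le_mul h1 h2
      _ = b ^ (2 + (n - 1)) := (pow_add b 2 (n-1)).symm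
      _ = b ^ (n + 1) := by congr 1; omega
  have hR : p j₀ * ∏ j, p j ^ c j ≤ b ^ (n + 1) := by
    have h2 : (∏ j, p j ^ c j) ≤ b ^ n := by
      calc (∏ j, p j ^ c j) ≤ ∏ j, b ^ c j :=
            Finset.prod_le_prod (fun i _ => Nat.zero_le _)
              (fun i _ => Nat.pow_le_pow_left (hp_le i) _)
        _ = b ^ (∑ j, c j) := by rw [Finset.prod_pow_eq_pow_sum]
        _ = b ^ n := by rw [hc]
    calc p j₀ * ∏ j, p j ^ c j ≤ b * b ^ n := Nat.mul_le_mul (hp_le j₀) h2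
      _ = b ^ (n + 1) := by ring
  -- congruence with bounds gives equality
  have heq : p j₁ ^ 2 * ∏ i, p (r i) = p j₀ * ∏ j, p j ^ c j := by
    have := hmod
    unfold Nat.ModEq at this
    rwa [Nat.mod_eq_of_lt (lt_of_le_of_lt hL hbn),
      Nat.mod_eq_of_lt (lt_of_le_of_lt hR hbn)] at this
  -- p j₀ divides RHS but not LHS
  have hdvd : p j₀ ∣ p j₁ ^ 2 * ∏ i, p (r i) := heq ▸ Dvd.intro _ rfl
  have hP := hp_prime j₀
  rcases (Nat.Prime.dvd_mul hP).mp hdvd with h | h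
  · have := hP.dvd_of_dvd_pow h
    have : p j₀ = p j₁ := ((Nat.prime_dvd_prime_iff_eq hP (hp_prime j₁)).mp this)
    exact hj (hp_inj this)
  · obtain ⟨i, _, hi⟩ := hP.prime.exists_mem_finset_dvd h
    have : p j₀ = p (r i) := (Nat.prime_dvd_prime_iff_eq hP (hp_prime _)).mp hi
    exact hr i (hp_inj this).symm
end

section
/- Let q be a prime, let n ≥ 1, and work in the group of units of ℤ/qℤ. Let g be a unit modulo q, let d₁, …, dₙ, x₁, …, xₙ, s be integers, let e = g^{d₁+⋯+dₙ}, let p₁, …, p_k be distinct primes each at most b with b^n < q, let δ ∈ {1,…,n}, and let r : {1,…,n} → {1,…,k} give each voter's chosen prime index, with each prime p_j nonzero modulo q. Then the tally product P = (p_{r(δ)} · e^{x_δ}) · ∏_{i≠δ} ((p_{r(i)} · g^{s}) · e^{x_i}) · g^{-(n-1)s} · ∏_{i=1}^{n} (∏_{k'=1}^{n} g^{x_{k'}})^{-d_i}, computed in ℤ/qℤ, equals the residue modulo q of the integer ∏_{j=1}^{k} p_j^{a_j}, where a_j = |{ i : r(i) = j }|; consequently, by the bound b^n < q, P uniquely determines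 the vote counts a₁, …, a_k. (End-to-end correctness of BVOT: any party can compute the exact number of votes for each prime from the published values.) -/
/-!
Write `e = g ^ D` with `D = ∑ dᵢ` and `T = ∑ xᵢ`. Multiplying the ballots gives the product of the
chosen primes times `(g ^ s) ^ (n - 1) * e ^ T`; the distributor's factor removes the masks and the
decryption shares multiply to `(g ^ T) ^ (-D) = (e ^ T)⁻¹`. The product of the chosen primes is
`∏ pⱼ ^ aⱼ`, and two such products with exponent sums at most `n` are below `b ^ n < q`, so they
agree modulo `q` only if they are equal, hence only if their exponents agree.
-/

open Finset Function

theorem Finset.prod_zpow_eq_zpow_sum₀ {ι G : Type*} [CommGroupWithZero G] (s : Finset ι) {g : G}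
    (hg : g ≠ 0) (f : ι → ℤ) : ∏ i ∈ s, g ^ f i = g ^ ∑ i ∈ s, f i := by
  classical
  induction s using Finset.induction_on with
  | empty => simp
  | insert a s ha ih => rw [prod_insert ha, sum_insert ha, zpow_add₀ hg, ih]

theorem Finset.prod_comp_eq_prod_pow_card_fiber {ι κ M : Type*} [CommMonoid M] [Fintype ι]
    [Fintype κ] [DecidableEq κ] (f : κ → M) (r : ι → κ) :
    ∏ i, f (r i) = ∏ j, f j ^ #{i | r i = j} := by
  simp_rw [← prod_const, prod_fiberwise']

section Tally

variable {G ι : Type*} [CommGroupWithZero G] [Fintype ι]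

theorem prod_decryption_shares_eq_inv {g : G} (hg : g ≠ 0) (d x : ι → ℤ) :
    ∏ i, (∏ k, g ^ x k) ^ (-d i) = ((g ^ ∑ i, d i) ^ ∑ i, x i)⁻¹ := by
  rw [prod_zpow_eq_zpow_sum₀ _ hg, prod_zpow_eq_zpow_sum₀ _ (zpow_ne_zero _ hg), sum_neg_distrib,
    zpow_neg, ← zpow_mul, ← zpow_mul, mul_comm]

variable [DecidableEq ι]

theorem prod_ballots_eq (m : ι → G) (μ : G) {e : G} (he : e ≠ 0) (x : ι → ℤ) (δ : ι) :
    (m δ * e ^ x δ) * ∏ i ∈ univ \ {δ}, (m i * μ) * e ^ x i =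
      (∏ i, m i) * μ ^ (Fintype.card ι - 1) * e ^ ∑ i, x i := by
  have hmask : ∏ i ∈ univ \ {δ}, (m i * μ) * e ^ x i =
      (∏ i ∈ univ \ {δ}, m i * e ^ x i) * μ ^ (Fintype.card ι - 1) := by
    have hcard : #(univ \ {δ}) = Fintype.card ι - 1 := by
      rw [sdiff_singleton_eq_erase, card_erase_of_mem (mem_univ δ), card_univ]
    rw [← hcard, ← prod_const, ← prod_mul_distrib]
    exact prod_congr rfl fun i _ => mul_right_comm _ _ _
  rw [hmask, ← mul_assoc, sdiff_singleton_eq_erase,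
    mul_prod_erase univ (fun i => m i * e ^ x i) (mem_univ δ), prod_mul_distrib,
    prod_zpow_eq_zpow_sum₀ _ he, mul_right_comm]

theorem tally_eq_prod_votes (m : ι → G) {g : G} (hg : g ≠ 0) (d x : ι → ℤ) (s : ℤ) (δ : ι) :
    (m δ * (g ^ ∑ i, d i) ^ x δ) *
        (∏ i ∈ univ \ {δ}, (m i * g ^ s) * (g ^ ∑ i, d i) ^ x i) *
        g ^ (-(((Fintype.card ι : ℤ) - 1) * s)) *
        (∏ i, (∏ k, g ^ x k) ^ (-d i)) = ∏ i, m i := by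
  have hcard : ((Fintype.card ι - 1 : ℕ) : ℤ) = Fintype.card ι - 1 := by
    have := Fintype.card_pos_iff.2 ⟨δ⟩
    omega
  have hunmask : (g ^ s) ^ (Fintype.card ι - 1) * g ^ (-(((Fintype.card ι : ℤ) - 1) * s)) = 1 := by
    rw [← zpow_natCast, ← zpow_mul, ← zpow_add₀ hg, hcard, mul_comm, add_neg_cancel, zpow_zero]
  rw [prod_ballots_eq m _ (zpow_ne_zero _ hg), prod_decryption_shares_eq_inv hg,
    mul_right_comm _ (g ^ _), mul_inv_cancel_right₀ (zpow_ne_zero _ (zpow_ne_zero _ hg)), mul_assoc,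
    hunmask, mul_one]

end Tally

namespace Nat

variable {κ : Type*} {p : κ → ℕ}

theorem prod_pow_le_pow_sum {b : ℕ} (hpb : ∀ j, p j ≤ b) (s : Finset κ) (c : κ → ℕ) :
    ∏ j ∈ s, p j ^ c j ≤ b ^ ∑ j ∈ s, c j := by
  rw [← prod_pow_eq_pow_sum]
  exact prod_le_prod' fun j _ => Nat.pow_le_pow_left (hpb j) _

variable [Fintype κ]

theorem factorization_prod_pow_apply (hp : ∀ j, (p j).Prime) (hinj : Injective p) (c : κ → ℕ)
    (j : κ) : (∏ j', p j' ^ c j').factorization (p j) = c j := by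
  classical
  rw [factorization_prod fun j' _ => pow_ne_zero _ (hp j').ne_zero, Finset.sum_apply',
    sum_eq_single j]
  · simp [(hp j).factorization_pow]
  · intro j' _ hj'
    rw [(hp j').factorization_pow, Finsupp.single_eq_of_ne' (hinj.ne hj')]
  · simp

theorem prod_pow_injective (hp : ∀ j, (p j).Prime) (hinj : Injective p) :
    Injective fun c : κ → ℕ => ∏ j, p j ^ c j := fun a c h =>
  funext fun j => by
    rw [← factorization_prod_pow_apply hp hinj a, ← factorization_prod_pow_apply hp hinj c]
    exact congrArg (fun m => m.factorization (p j)) h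

end Nat

theorem eq_of_natCast_prod_pow_eq {R κ : Type*} [AddMonoidWithOne R] [IsRightCancelAdd R]
    {q : ℕ} [CharP R q] [Fintype κ] {p : κ → ℕ} (hp : ∀ j, (p j).Prime) (hinj : Injective p)
    {b n : ℕ} (hb : 1 ≤ b) (hpb : ∀ j, p j ≤ b) (hbq : b ^ n < q) {a c : κ → ℕ}
    (ha : ∑ j, a j ≤ n) (hc : ∑ j, c j ≤ n)
    (h : ((∏ j, p j ^ a j : ℕ) : R) = ((∏ j, p j ^ c j : ℕ) : R)) : a = c := by
  have hlt : ∀ c : κ → ℕ, ∑ j, c j ≤ n → ∏ j, p j ^ c j < q := fun c hc =>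
    ((Nat.prod_pow_le_pow_sum hpb _ c).trans (Nat.pow_le_pow_right hb hc)).trans_lt hbq
  exact Nat.prod_pow_injective hp hinj (CharP.natCast_injOn_Iio R q (hlt a ha) (hlt c hc) h)

theorem bvot_end_to_end_correct_general
    (q : ℕ) (hq : q.Prime) (n : ℕ) :
    haveI : Fact q.Prime := ⟨hq⟩
    ∀ (g : ZMod q), IsUnit g →
    ∀ (d x : Fin n → ℤ) (s : ℤ) (e : ZMod q), e = g ^ (∑ i, d i) →
    ∀ (b k : ℕ) (p : Fin k → ℕ),
      (∀ j, (p j).Prime) → Function.Injective p → (∀ j, p j ≤ b) → b ^ n < q →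
    ∀ (δ : Fin n) (r : Fin n → Fin k), (∀ j, ((p j : ZMod q) ≠ 0)) →
    ((p (r δ) : ZMod q) * e ^ (x δ)) *
        (∏ i ∈ Finset.univ \ {δ}, ((p (r i) : ZMod q) * g ^ s) * e ^ (x i)) *
        g ^ (-(((n : ℤ) - 1) * s)) *
        (∏ i, (∏ k', g ^ (x k')) ^ (-(d i))) =
      ((∏ j, p j ^ (Finset.univ.filter fun i => r i = j).card : ℕ) : ZMod q) ∧
    ∀ a' : Fin k → ℕ, ∑ j, a' j ≤ n →
      ((∏ j, p j ^ a' j : ℕ) : ZMod q) =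
        ((∏ j, p j ^ (Finset.univ.filter fun i => r i = j).card : ℕ) : ZMod q) →
      ∀ j, a' j = (Finset.univ.filter fun i => r i = j).card := by
  have : Fact q.Prime := ⟨hq⟩
  intro g hg d x s e he b k p hp hinj hpb hbq δ r _
  have htally := tally_eq_prod_votes (fun i => (p (r i) : ZMod q)) hg.ne_zero d x s δ
  rw [Fintype.card_fin, ← he, prod_comp_eq_prod_pow_card_fiber (fun j => (p j : ZMod q))] at htally
  refine ⟨by exact_mod_cast htally, fun a' ha' hcast => congrFun ?_⟩
  have hvotes : ∑ j, #{i | r i = j} = n := by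
    rw [← card_eq_sum_card_fiberwise fun i _ => mem_univ (r i), card_univ, Fintype.card_fin]
  exact eq_of_natCast_prod_pow_eq hp hinj ((hp (r δ)).one_le.trans (hpb _)) hpb hbq ha'
    hvotes.le hcast

/-- End-to-end correctness of BVOT over `ℤ/qℤ` for a prime `q`: the tally
product `P` of the distributor's encrypted unmasked vote, the other voters'
encrypted masked votes, the unmasking factor `g^(-(n-1)s)` and all decryption
shares equals the residue modulo `q` of the integer `∏ⱼ pⱼ^(aⱼ)`, where `aⱼ`
is the number of voters who chose prime `pⱼ`; consequently, by the bound
`b^n < q`, the value `P` uniquely determines the vote counts `aⱼ`. -/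
theorem bvot_end_to_end_correct
    (q : ℕ) (hq : q.Prime) (n : ℕ) (hn : 1 ≤ n) :
    haveI : Fact q.Prime := ⟨hq⟩
    ∀ (g : ZMod q), IsUnit g →
    ∀ (d x : Fin n → ℤ) (s : ℤ) (e : ZMod q), e = g ^ (∑ i, d i) →
    ∀ (b k : ℕ) (p : Fin k → ℕ),
      (∀ j, (p j).Prime) → Function.Injective p → (∀ j, p j ≤ b) → b ^ n < q →
    ∀ (δ : Fin n) (r : Fin n → Fin k), (∀ j, ((p j : ZMod q) ≠ 0)) →
    ((p (r δ) : ZMod q) * e ^ (x δ)) *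
        (∏ i ∈ Finset.univ \ {δ}, ((p (r i) : ZMod q) * g ^ s) * e ^ (x i)) *
        g ^ (-(((n : ℤ) - 1) * s)) *
        (∏ i, (∏ k', g ^ (x k')) ^ (-(d i))) =
      ((∏ j, p j ^ (Finset.univ.filter fun i => r i = j).card : ℕ) : ZMod q) ∧
    ∀ a' : Fin k → ℕ, ∑ j, a' j ≤ n →
      ((∏ j, p j ^ a' j : ℕ) : ZMod q) =
        ((∏ j, p j ^ (Finset.univ.filter fun i => r i = j).card : ℕ) : ZMod q) →
      ∀ j, a' j = (Finset.univ.filter fun i => r i = j).card :=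
  bvot_end_to_end_correct_general q hq n
end
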